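/- Let S_l = {t ∈ [0,2^{-l}) : Σ_{j=0}^{2^{l+1}-1} χ_Γ(t - 1 + j·2^{-l}) ≥ 2} and M_l = ∫_{S_l} Σ_{j=0}^{2^{l+1}-1} χ_Γ(t - 1 + j·2^{-l}) dt for a measurable Γ ⊂ [-1,1]. Then for every integer l ≥ 0, M_l − M_{l−1} ≤ 2·Leb(S_l). -/

import Mathlib

/-!
Write `N_l(t) = dyadicCount Γ l t` for the number of `j < 2^{l+1}` with `t - 1 + j 2^{-l} ∈ Γ`.
Splitting `j` into even and odd indices gives `N_l(t) = N_{l-1}(t) + N_{l-1}(t + 2^{-l})`.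
`M_l` is the integral over `[0, 2^{-l})` of `collisionMass (N_l t) = N_l(t) 1[N_l(t) ≥ 2]`, and
`M_{l-1}`, an integral over `[0, 2^{-l+1})`, folds onto `[0, 2^{-l})` as the sum of the collision
masses of the two halves. For natural numbers `a, b` the collision mass of `a + b` exceeds the sum
of those of `a` and `b` by at most `2 · 1[a + b ≥ 2]`, and integrating this over `[0, 2^{-l})`
gives `M_l - M_{l-1} ≤ 2 Leb(S_l)`.
-/

open MeasureTheory Set

theorem Finset.sum_range_two_mul {M : Type*} [AddCommMonoid M] (n : ℕ) (f : ℕ → M) :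
    ∑ k ∈ Finset.range (2 * n), f k
      = ∑ j ∈ Finset.range n, f (2 * j) + ∑ j ∈ Finset.range n, f (2 * j + 1) := by
  induction n with
  | zero => simp
  | succ n ih =>
    rw [Nat.mul_succ, Finset.sum_range_succ, Finset.sum_range_succ, ih,
      Finset.sum_range_succ (fun j => f (2 * j)), Finset.sum_range_succ (fun j => f (2 * j + 1))]
    abel

theorem two_zpow_neg_sub_one (l : ℤ) : (2 : ℝ) ^ (-(l - 1)) = 2 * 2 ^ (-l) := by
  rw [neg_sub, sub_eq_neg_add, zpow_add₀ two_ne_zero, zpow_one, mul_comm]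

theorem integral_Ico_add_two_mul {E : Type*} [NormedAddCommGroup E] [NormedSpace ℝ E]
    {f : ℝ → E} {a c : ℝ} (hc : 0 ≤ c) (hf : IntegrableOn f (Ico a (a + 2 * c))) :
    ∫ t in Ico a (a + 2 * c), f t = ∫ t in Ico a (a + c), (f t + f (t + c)) := by
  have hlow : IntervalIntegrable f volume a (a + c) :=
    (intervalIntegrable_iff_integrableOn_Ico_of_le (by linarith)).2
      (hf.mono_set (Ico_subset_Ico_right (by linarith)))
  have hupp : IntervalIntegrable f volume (a + c) (a + 2 * c) :=
    (intervalIntegrable_iff_integrableOn_Ico_of_le (by linarith)).2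
      (hf.mono_set (Ico_subset_Ico_left (by linarith)))
  have hshift : IntervalIntegrable (fun t => f (t + c)) volume a (a + c) := by
    have h := hupp.comp_add_right c
    rwa [add_sub_cancel_right, show a + 2 * c - c = a + c by ring] at h
  rw [integral_Ico_eq_integral_Ioc, integral_Ico_eq_integral_Ioc,
    ← intervalIntegral.integral_of_le (by linarith),
    ← intervalIntegral.integral_of_le (by linarith),
    ← intervalIntegral.integral_add_adjacent_intervals hlow hupp,
    intervalIntegral.integral_add hlow hshift, intervalIntegral.integral_comp_add_right]
  ring_nf

def collisionMass (n : ℕ) : ℕ := if 2 ≤ n then n else 0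

-- Integrality is what makes this work: `a < 2` forces `a ≤ 1`.
theorem collisionMass_add_le (a b : ℕ) :
    collisionMass (a + b) ≤ collisionMass a + collisionMass b + if 2 ≤ a + b then 2 else 0 := by
  unfold collisionMass; split_ifs <;> omega

section NatValued

variable {α : Type*} [MeasurableSpace α] {μ : Measure α} {f : α → ℕ}

theorem integrableOn_comp_of_le (hf : Measurable f) {B : ℕ} (hB : ∀ x, f x ≤ B) (g : ℕ → ℝ)
    {s : Set α} (hs : μ s ≠ ⊤) : IntegrableOn (fun x => g (f x)) s μ :=
  Measure.integrableOn_of_bounded hs (measurable_from_nat.comp hf).aestronglyMeasurable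
    (ae_of_all _ fun x => Finset.single_le_sum (f := fun n => ‖g n‖) (fun _ _ => norm_nonneg _)
      (Finset.mem_range.2 (Nat.lt_succ_of_le (hB x))))

theorem setIntegral_inter_setOf_two_le (hf : Measurable f) (s : Set α) :
    ∫ x in s ∩ {x | 2 ≤ f x}, (f x : ℝ) ∂μ = ∫ x in s, (collisionMass (f x) : ℝ) ∂μ := by
  rw [← setIntegral_indicator (measurableSet_le measurable_const hf)]
  congr with x
  simp only [collisionMass, Set.indicator_apply, mem_ofPred_eq]
  split_ifs <;> simp

theorem setIntegral_ite_two_le (hf : Measurable f) (s : Set α) :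
    ∫ x in s, (if 2 ≤ f x then (2 : ℝ) else 0) ∂μ = 2 * μ.real (s ∩ {x | 2 ≤ f x}) := by
  have hind : (fun x => if 2 ≤ f x then (2 : ℝ) else 0) = {x | 2 ≤ f x}.indicator fun _ => 2 := by
    ext x; simp [Set.indicator_apply]
  rw [hind, setIntegral_indicator (measurableSet_le measurable_const hf), setIntegral_const,
    smul_eq_mul, mul_comm]

end NatValued

noncomputable def dyadicCount (Γ : Set ℝ) (l : ℤ) (t : ℝ) : ℕ :=
  ∑ j ∈ Finset.range (2 ^ (l + 1).toNat), Γ.indicator (fun _ => 1) (t - 1 + j * (2 : ℝ) ^ (-l))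

theorem natCast_dyadicCount (Γ : Set ℝ) (l : ℤ) (t : ℝ) :
    (dyadicCount Γ l t : ℝ) = ∑ j ∈ Finset.range (2 ^ (l + 1).toNat),
      Γ.indicator (fun _ => (1 : ℝ)) (t - 1 + j * (2 : ℝ) ^ (-l)) := by
  rw [dyadicCount, Nat.cast_sum]
  refine Finset.sum_congr rfl fun j _ => ?_
  classical
  simp only [Set.indicator_apply, apply_ite (Nat.cast : ℕ → ℝ), Nat.cast_one, Nat.cast_zero]

theorem measurable_dyadicCount {Γ : Set ℝ} (hΓ : MeasurableSet Γ) (l : ℤ) :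
    Measurable (dyadicCount Γ l) :=
  Finset.measurable_sum _ fun _ _ => (measurable_const.indicator hΓ).comp (by fun_prop)

theorem dyadicCount_le (Γ : Set ℝ) (l : ℤ) (t : ℝ) : dyadicCount Γ l t ≤ 2 ^ (l + 1).toNat :=
  calc dyadicCount Γ l t ≤ ∑ _j ∈ Finset.range (2 ^ (l + 1).toNat), 1 :=
        Finset.sum_le_sum fun _ _ => Set.indicator_le_self' (fun _ _ => zero_le_one) _
    _ = 2 ^ (l + 1).toNat := by simp

theorem dyadicCount_eq_add (Γ : Set ℝ) {l : ℤ} (hl : 0 ≤ l) (t : ℝ) :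
    dyadicCount Γ l t = dyadicCount Γ (l - 1) t + dyadicCount Γ (l - 1) (t + 2 ^ (-l)) := by
  have hlen : (l + 1).toNat = (l - 1 + 1).toNat + 1 := by omega
  unfold dyadicCount
  rw [hlen, pow_succ', Finset.sum_range_two_mul, two_zpow_neg_sub_one]
  congr 1 <;> refine Finset.sum_congr rfl fun j _ => ?_ <;> congr 1 <;> push_cast <;> ring

theorem integrableOn_Ico_comp_dyadicCount {Γ : Set ℝ} (hΓ : MeasurableSet Γ) (l : ℤ) (g : ℕ → ℝ)
    (d a b : ℝ) : IntegrableOn (fun t => g (dyadicCount Γ l (t + d))) (Ico a b) :=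
  integrableOn_comp_of_le ((measurable_dyadicCount hΓ l).comp (measurable_add_const d))
    (fun t => dyadicCount_le Γ l (t + d)) g measure_Ico_lt_top.ne

theorem stmt_1 (Γ : Set ℝ) (hmeas : MeasurableSet Γ)
    (S : ℤ → Set ℝ)
    (hS : ∀ l : ℤ, S l = {t : ℝ | t ∈ Ico (0:ℝ) ((2:ℝ) ^ (-l)) ∧
      2 ≤ ∑ j ∈ Finset.range (2 ^ (l + 1).toNat),
        Γ.indicator (fun _ => (1:ℝ)) (t - 1 + (j:ℝ) * (2:ℝ) ^ (-l))})
    (M : ℤ → ℝ)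
    (hM : ∀ l : ℤ, M l = ∫ t in S l,
      (∑ j ∈ Finset.range (2 ^ (l + 1).toNat),
        Γ.indicator (fun _ => (1:ℝ)) (t - 1 + (j:ℝ) * (2:ℝ) ^ (-l)))) :
    ∀ l : ℤ, 0 ≤ l → M l - M (l - 1) ≤ 2 * (volume (S l)).toReal := by
  have hN := measurable_dyadicCount hmeas
  have hS' : ∀ k, S k = Ico 0 (2 ^ (-k)) ∩ {t | 2 ≤ dyadicCount Γ k t} := by
    intro k; ext t
    simp only [hS, ← natCast_dyadicCount, Nat.ofNat_le_cast, mem_inter_iff, mem_ofPred_eq]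
  have hM' : ∀ k, M k = ∫ t in Ico 0 (2 ^ (-k)), (collisionMass (dyadicCount Γ k t) : ℝ) := by
    intro k
    rw [hM, ← setIntegral_inter_setOf_two_le (hN k), ← hS']
    simp only [natCast_dyadicCount]
  intro l hl
  set c : ℝ := 2 ^ (-l)
  have hint (k : ℤ) (g : ℕ → ℝ) (a b : ℝ) :
      IntegrableOn (fun t => g (dyadicCount Γ k t)) (Ico a b) := by
    simpa using integrableOn_Ico_comp_dyadicCount hmeas k g 0 a b
  have hmass_int (k : ℤ) (a b : ℝ) :
      IntegrableOn (fun t => (collisionMass (dyadicCount Γ k t) : ℝ)) (Ico a b) :=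
    hint k (fun n => collisionMass n) a b
  have hpair_int := (hmass_int (l - 1) 0 c).add
    (integrableOn_Ico_comp_dyadicCount hmeas (l - 1) (fun n => (collisionMass n : ℝ)) c 0 c)
  have hite_int := hint l (fun n => if 2 ≤ n then 2 else 0) 0 c
  have hmass (t : ℝ) : (collisionMass (dyadicCount Γ l t) : ℝ) ≤
      collisionMass (dyadicCount Γ (l - 1) t) + collisionMass (dyadicCount Γ (l - 1) (t + c))
        + if 2 ≤ dyadicCount Γ l t then (2 : ℝ) else 0 := by
    rw [dyadicCount_eq_add Γ hl]
    exact_mod_cast collisionMass_add_le _ _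
  rw [hM', hM', two_zpow_neg_sub_one, ← zero_add (2 * c),
    integral_Ico_add_two_mul (by positivity) (hmass_int _ _ _), zero_add, sub_le_iff_le_add',
    hS', ← measureReal_def, ← setIntegral_ite_two_le (hN l)]
  exact (setIntegral_mono (hmass_int _ _ _) (hpair_int.add hite_int) hmass).trans_eq
    (integral_add hpair_int hite_int)
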